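/- The disjunction elimination with first-order side formulas is sound in team semantics: if Δ₀ ∪ {φ} ⊨ χ and Δ₁ ∪ {ψ} ⊨ χ where Δ₀, Δ₁ are sets of first-order formulas, φ, ψ are inclusion logic formulas, and χ is an inclusion logic formula, then Δ₀ ∪ Δ₁ ∪ {φ ∨ ψ} ⊨ χ. -/

import Mathlib

/-! Split a team satisfying `φ ∨ ψ` as `Y ∪ Z` with `Y ⊨ φ` and `Z ⊨ ψ`. First-order formulas are
downward closed, so `Δ₀` holds on `Y` and `Δ₁` on `Z`; hence `χ` holds on both halves, and since
inclusion logic is closed under unions of teams, it holds on `Y ∪ Z`. -/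

namespace TeamSem

variable {M : Type}

/-- A team is a set of assignments (variables are natural numbers). -/
abbrev Team (M : Type) := Set (ℕ → M)

/-- Lax existential extension of a team `X` along variable `x` by a choice function `F`. -/
def extT (X : Team M) (x : ℕ) (F : (ℕ → M) → Set M) : Team M :=
  {t | ∃ s ∈ X, ∃ a ∈ F s, t = Function.update s x a}

/-- Universal extension of a team `X` along variable `x`. -/
def extAll (X : Team M) (x : ℕ) : Team M :=
  {t | ∃ s ∈ X, ∃ a : M, t = Function.update s x a}

/-- First-order formulas with semantic atoms depending on a finite list of variables. -/
inductive FOForm (M : Type) where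
  | atom : List ℕ → (List M → Prop) → FOForm M
  | neg  : FOForm M → FOForm M
  | and  : FOForm M → FOForm M → FOForm M
  | or   : FOForm M → FOForm M → FOForm M
  | ex   : ℕ → FOForm M → FOForm M
  | all  : ℕ → FOForm M → FOForm M

/-- Tarskian (single-assignment) satisfaction for first-order formulas. -/
def FOForm.sat : FOForm M → (ℕ → M) → Prop
  | .atom l p, s => p (l.map s)
  | .neg φ, s => ¬ FOForm.sat φ s
  | .and φ ψ, s => FOForm.sat φ s ∧ FOForm.sat ψ s
  | .or φ ψ, s => FOForm.sat φ s ∨ FOForm.sat ψ s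
  | .ex x φ, s => ∃ a : M, FOForm.sat φ (Function.update s x a)
  | .all x φ, s => ∀ a : M, FOForm.sat φ (Function.update s x a)

/-- Free variables of a first-order formula. -/
def FOForm.fv : FOForm M → Set ℕ
  | .atom l _ => {v | v ∈ l}
  | .neg φ => FOForm.fv φ
  | .and φ ψ => FOForm.fv φ ∪ FOForm.fv ψ
  | .or φ ψ => FOForm.fv φ ∪ FOForm.fv ψ
  | .ex x φ => FOForm.fv φ \ {x}
  | .all x φ => FOForm.fv φ \ {x}

/-- Formulas of inclusion logic: first-order formulas (with negation applied
only to first-order formulas), inclusion atoms, ∧, ∨, ∃, ∀. -/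
inductive IncForm (M : Type) where
  | fo   : FOForm M → IncForm M
  | incl : List ℕ → List ℕ → IncForm M
  | and  : IncForm M → IncForm M → IncForm M
  | or   : IncForm M → IncForm M → IncForm M
  | ex   : ℕ → IncForm M → IncForm M
  | all  : ℕ → IncForm M → IncForm M

/-- Lax team semantics for inclusion logic. -/
def IncForm.tsat : IncForm M → Team M → Prop
  | .fo α, X => ∀ s ∈ X, FOForm.sat α s
  | .incl xs ys, X => ∀ s ∈ X, ∃ s' ∈ X, xs.map s = ys.map s'
  | .and φ ψ, X => IncForm.tsat φ X ∧ IncForm.tsat ψ X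
  | .or φ ψ, X => ∃ Y Z : Team M, X = Y ∪ Z ∧ IncForm.tsat φ Y ∧ IncForm.tsat ψ Z
  | .ex x φ, X => ∃ F : (ℕ → M) → Set M, (∀ s ∈ X, (F s).Nonempty) ∧
      IncForm.tsat φ (extT X x F)
  | .all x φ, X => IncForm.tsat φ (extAll X x)

/-- Free variables of an inclusion logic formula. -/
def IncForm.fv : IncForm M → Set ℕ
  | .fo α => FOForm.fv α
  | .incl xs ys => {v | v ∈ xs ∨ v ∈ ys}
  | .and φ ψ => IncForm.fv φ ∪ IncForm.fv ψ
  | .or φ ψ => IncForm.fv φ ∪ IncForm.fv ψ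
  | .ex x φ => IncForm.fv φ \ {x}
  | .all x φ => IncForm.fv φ \ {x}

/-- A block of existential quantifiers. -/
def IncForm.exs (l : List ℕ) (φ : IncForm M) : IncForm M := l.foldr IncForm.ex φ

/-- A block of universal quantifiers. -/
def IncForm.alls (l : List ℕ) (φ : IncForm M) : IncForm M := l.foldr IncForm.all φ

/-- Team-semantic entailment: every team satisfying all of `Γ` satisfies `χ`. -/
def entails (Γ : Set (IncForm M)) (χ : IncForm M) : Prop :=
  ∀ X : Team M, (∀ γ ∈ Γ, IncForm.tsat γ X) → IncForm.tsat χ X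

theorem extT_union (Y Z : Team M) (x : ℕ) (F G : (ℕ → M) → Set M) :
    extT (Y ∪ Z) x (fun s => {a | s ∈ Y ∧ a ∈ F s ∨ s ∈ Z ∧ a ∈ G s}) =
      extT Y x F ∪ extT Z x G := by
  ext t
  constructor
  · rintro ⟨s, -, a, (⟨hs, ha⟩ | ⟨hs, ha⟩), rfl⟩
    exacts [Or.inl ⟨s, hs, a, ha, rfl⟩, Or.inr ⟨s, hs, a, ha, rfl⟩]
  · rintro (⟨s, hs, a, ha, rfl⟩ | ⟨s, hs, a, ha, rfl⟩)
    exacts [⟨s, Or.inl hs, a, Or.inl ⟨hs, ha⟩, rfl⟩, ⟨s, Or.inr hs, a, Or.inr ⟨hs, ha⟩, rfl⟩]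

theorem extAll_union (Y Z : Team M) (x : ℕ) :
    extAll (Y ∪ Z) x = extAll Y x ∪ extAll Z x := by
  ext t
  constructor
  · rintro ⟨s, hs | hs, a, rfl⟩
    exacts [Or.inl ⟨s, hs, a, rfl⟩, Or.inr ⟨s, hs, a, rfl⟩]
  · rintro (⟨s, hs, a, rfl⟩ | ⟨s, hs, a, rfl⟩)
    exacts [⟨s, Or.inl hs, a, rfl⟩, ⟨s, Or.inr hs, a, rfl⟩]

theorem IncForm.tsat_union {φ : IncForm M} {Y Z : Team M}
    (hY : φ.tsat Y) (hZ : φ.tsat Z) : φ.tsat (Y ∪ Z) := by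
  induction φ generalizing Y Z with
  | fo α => exact fun s hs => hs.elim (hY s) (hZ s)
  | incl xs ys =>
    rintro s (hs | hs)
    · obtain ⟨s', hs', he⟩ := hY s hs
      exact ⟨s', Or.inl hs', he⟩
    · obtain ⟨s', hs', he⟩ := hZ s hs
      exact ⟨s', Or.inr hs', he⟩
  | and φ ψ ihφ ihψ => exact ⟨ihφ hY.1 hZ.1, ihψ hY.2 hZ.2⟩
  | or φ ψ ihφ ihψ =>
    obtain ⟨A, B, rfl, hA, hB⟩ := hY
    obtain ⟨C, D, rfl, hC, hD⟩ := hZ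
    exact ⟨A ∪ C, B ∪ D, Set.union_union_union_comm A B C D, ihφ hA hC, ihψ hB hD⟩
  | ex x φ ih =>
    obtain ⟨F, hFne, hF⟩ := hY
    obtain ⟨G, hGne, hG⟩ := hZ
    refine ⟨_, ?_, (extT_union Y Z x F G).symm ▸ ih hF hG⟩
    rintro s (hs | hs)
    · obtain ⟨a, ha⟩ := hFne s hs
      exact ⟨a, Or.inl ⟨hs, ha⟩⟩
    · obtain ⟨a, ha⟩ := hGne s hs
      exact ⟨a, Or.inr ⟨hs, ha⟩⟩
  | all x φ ih =>
    change φ.tsat _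
    rw [extAll_union]
    exact ih hY hZ

theorem IncForm.tsat_fo_of_subset {α : FOForm M} {X Y : Team M} (hYX : Y ⊆ X)
    (hX : (IncForm.fo α).tsat X) : (IncForm.fo α).tsat Y :=
  fun s hs => hX s (hYX hs)

theorem or_elimination_sound (Δ₀ Δ₁ : Set (FOForm M)) (φ ψ χ : IncForm M)
    (h0 : entails ((IncForm.fo '' Δ₀) ∪ {φ}) χ)
    (h1 : entails ((IncForm.fo '' Δ₁) ∪ {ψ}) χ) :
    entails ((IncForm.fo '' Δ₀) ∪ (IncForm.fo '' Δ₁) ∪ {.or φ ψ}) χ := by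
  intro X hX
  obtain ⟨Y, Z, rfl, hY, hZ⟩ := hX (.or φ ψ) (Or.inr rfl)
  have hΔ₀ : ∀ α ∈ Δ₀, (IncForm.fo α).tsat Y := fun α hα =>
    IncForm.tsat_fo_of_subset Set.subset_union_left (hX _ (Or.inl (Or.inl ⟨α, hα, rfl⟩)))
  have hΔ₁ : ∀ α ∈ Δ₁, (IncForm.fo α).tsat Z := fun α hα =>
    IncForm.tsat_fo_of_subset Set.subset_union_right (hX _ (Or.inl (Or.inr ⟨α, hα, rfl⟩)))
  refine IncForm.tsat_union (h0 Y ?_) (h1 Z ?_)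
  · rintro γ (⟨α, hα, rfl⟩ | rfl)
    exacts [hΔ₀ α hα, hY]
  · rintro γ (⟨α, hα, rfl⟩ | rfl)
    exacts [hΔ₁ α hα, hZ]

end TeamSem
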